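/- Let k be an algebraically closed field of characteristic zero, p, q primes, and D an irreducible non-triangularizable homogeneous locally nilpotent derivation of rank 2 and degree pq−2 on k[X,Y,Z] in the normal form D = γΔ_{(X,P)} with P = T^p + c₁X^qT^{p−1} + ⋯ + c_{p−1}X^{pq−q}T + c_pX^{pq−1}Y, T = h(X,Y) + X^{q−1}Z, h homogeneous of degree q and monic in Y, c_p ≠ 0, and A = ker(D) = k[X,P]. Then B = k[X,Y,Z] is a free A-module with D-basis {Y^i T^j Z^l : 0 ≤ i ≤ q−1, 0 ≤ j ≤ p−1, l ≥ 0}, and for every n ∈ ℕ, writing n = tpq + sp + r with 0 ≤ r ≤ p−1 and 0 ≤ s ≤ q−1, the n-th image ideal is I_n = D^n(B) ∩ A = (X^{n(pq−2) + qr + s + t}). -/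

import Mathlib

/-- A derivation is locally nilpotent if every element is killed by some iterate. -/
def IsLND {k B : Type*} [CommRing k] [CommRing B] [Algebra k B]
    (D : Derivation k B B) : Prop :=
  ∀ b : B, ∃ n : ℕ, (⇑D)^[n] b = 0

/-- `ndeg D b n` says that `n` is the `D`-degree of `b`, i.e. the largest `m` with
`D^[m] b ≠ 0`. -/
def ndeg {k B : Type*} [CommRing k] [CommRing B] [Algebra k B]
    (D : Derivation k B B) (b : B) (n : ℕ) : Prop :=
  (⇑D)^[n] b ≠ 0 ∧ (⇑D)^[n + 1] b = 0

/-- A derivation is irreducible if the ideal generated by its image is not contained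
in any proper principal ideal. -/
def IsIrred {k B : Type*} [CommRing k] [CommRing B] [Algebra k B]
    (D : Derivation k B B) : Prop :=
  ∀ b : B, Ideal.span (Set.range (⇑D)) ≤ Ideal.span {b} → IsUnit b

open MvPolynomial

/-- The Jacobian derivation `g ↦ ∂(f₁,f₂,g)/∂(X₀,X₁,X₂)` on `k[X₀,X₁,X₂]`. -/
noncomputable def jac {k : Type*} [CommRing k]
    (f₁ f₂ g : MvPolynomial (Fin 3) k) : MvPolynomial (Fin 3) k :=
  Matrix.det (Matrix.of fun i j => MvPolynomial.pderiv j (![f₁, f₂, g] i))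

/-- `V 0, V 1, V 2` form a system of coordinates (variables) of `k[X₀,X₁,X₂]`. -/
def IsCoordSys {k : Type*} [CommRing k]
    (V : Fin 3 → MvPolynomial (Fin 3) k) : Prop :=
  ∃ σ : MvPolynomial (Fin 3) k ≃ₐ[k] MvPolynomial (Fin 3) k,
    ∀ i, σ (X i) = V i

/-- `D` is homogeneous of degree `d` with respect to the standard grading. -/
def IsHomogDer {k : Type*} [CommRing k]
    (D : Derivation k (MvPolynomial (Fin 3) k) (MvPolynomial (Fin 3) k))
    (d : ℕ) : Prop :=
  ∀ (i : ℕ) (f : MvPolynomial (Fin 3) k),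
    f.IsHomogeneous i → (D f).IsHomogeneous (i + d)

/-- `D` has rank 2: some coordinate system has its last variable in the kernel, but no
coordinate system has its last two variables in the kernel. -/
def HasRank2 {k : Type*} [CommRing k]
    (D : Derivation k (MvPolynomial (Fin 3) k) (MvPolynomial (Fin 3) k)) : Prop :=
  (∃ V : Fin 3 → MvPolynomial (Fin 3) k, IsCoordSys V ∧ D (V 2) = 0) ∧
  ¬ (∃ V : Fin 3 → MvPolynomial (Fin 3) k, IsCoordSys V ∧ D (V 1) = 0 ∧ D (V 2) = 0)

/-- `D` is triangularizable: in some coordinate system `{X,Y,Z}` one has `D X ∈ k`,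
`D Y ∈ k[X]`, `D Z ∈ k[X,Y]`. -/
def IsTriangularizable {k : Type*} [CommRing k]
    (D : Derivation k (MvPolynomial (Fin 3) k) (MvPolynomial (Fin 3) k)) : Prop :=
  ∃ V : Fin 3 → MvPolynomial (Fin 3) k, IsCoordSys V ∧
    (∃ c : k, D (V 0) = C c) ∧
    D (V 1) ∈ Algebra.adjoin k ({V 0} : Set (MvPolynomial (Fin 3) k)) ∧
    D (V 2) ∈ Algebra.adjoin k ({V 0, V 1} : Set (MvPolynomial (Fin 3) k))


set_option linter.unusedSectionVars false

section GeneralDer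

variable {k B : Type*} [CommRing k] [CommRing B] [Algebra k B] (D : Derivation k B B)

lemma auxIterZero (n : ℕ) : (⇑D)^[n] (0 : B) = 0 := by
  induction n with
  | zero => rfl
  | succ n ih => rw [Function.iterate_succ_apply, D.map_zero, ih]

lemma auxIterAdd (n : ℕ) (a b : B) : (⇑D)^[n] (a + b) = (⇑D)^[n] a + (⇑D)^[n] b := by
  induction n generalizing a b with
  | zero => rfl
  | succ n ih =>
      rw [Function.iterate_succ_apply, D.map_add, ih, ← Function.iterate_succ_apply,
        ← Function.iterate_succ_apply]

lemma auxIterSub (n : ℕ) (a b : B) : (⇑D)^[n] (a - b) = (⇑D)^[n] a - (⇑D)^[n] b := by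
  induction n generalizing a b with
  | zero => rfl
  | succ n ih =>
      rw [Function.iterate_succ_apply, D.map_sub, ih, ← Function.iterate_succ_apply,
        ← Function.iterate_succ_apply]

lemma auxIterSum {ι : Type*} (n : ℕ) (s : Finset ι) (f : ι → B) :
    (⇑D)^[n] (∑ v ∈ s, f v) = ∑ v ∈ s, (⇑D)^[n] (f v) := by
  classical
  induction s using Finset.induction_on with
  | empty => simp [auxIterZero]
  | insert _ _ h ih => rw [Finset.sum_insert h, Finset.sum_insert h, auxIterAdd, ih]

/-- iterate on a kernel multiple -/
lemma auxIterKerMul {a : B} (ha : D a = 0) (n : ℕ) (b : B) :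
    (⇑D)^[n] (a * b) = a * (⇑D)^[n] b := by
  induction n generalizing b with
  | zero => rfl
  | succ n ih =>
      rw [Function.iterate_succ_apply, Function.iterate_succ_apply, D.leibniz,
        smul_eq_mul, smul_eq_mul, ha, mul_zero, add_zero, ih]

/-- if `D z = 0` then all positive iterates vanish -/
lemma auxIterKer {z : B} (hz : D z = 0) {m : ℕ} (hm : 1 ≤ m) : (⇑D)^[m] z = 0 := by
  obtain ⟨m, rfl⟩ : ∃ m', m = m' + 1 := ⟨m - 1, by omega⟩
  rw [Function.iterate_succ_apply, hz, auxIterZero]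

lemma auxIterPast {b : B} {d : ℕ} (hb : (⇑D)^[d] b = 0) {m : ℕ} (hm : d ≤ m) :
    (⇑D)^[m] b = 0 := by
  obtain ⟨e, rfl⟩ : ∃ e, m = e + d := ⟨m - d, by omega⟩
  rw [Function.iterate_add_apply, hb, auxIterZero]



/-- vanishing of high iterates on products -/
lemma auxMulZero : ∀ (N α β : ℕ) (a b : B), α + β ≤ N →
    (⇑D)^[α + 1] a = 0 → (⇑D)^[β + 1] b = 0 → (⇑D)^[α + β + 1] (a * b) = 0 := by
  intro N
  induction N with
  | zero =>
      intro α β a b hN ha hb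
      obtain ⟨rfl, rfl⟩ : α = 0 ∧ β = 0 := by omega
      rw [Function.iterate_one] at ha hb ⊢
      rw [D.leibniz, smul_eq_mul, smul_eq_mul, ha, hb, mul_zero, mul_zero, add_zero]
  | succ N ih =>
      intro α β a b hN ha hb
      have hstep : (⇑D)^[α + β + 1] (a * b)
          = (⇑D)^[α + β] (a * D b) + (⇑D)^[α + β] (b * D a) := by
        rw [Function.iterate_succ_apply, D.leibniz, smul_eq_mul, smul_eq_mul, auxIterAdd]
      have h1 : (⇑D)^[α + β] (a * D b) = 0 := by
        rcases Nat.eq_zero_or_pos β with hβ | hβ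
        · subst hβ
          rw [Function.iterate_one] at hb
          rw [hb, mul_zero, auxIterZero]
        · obtain ⟨β', rfl⟩ : ∃ β', β = β' + 1 := ⟨β - 1, by omega⟩
          have := ih α β' a (D b) (by omega) ha
            (by rw [← Function.iterate_succ_apply]; exact hb)
          simpa [show α + (β' + 1) = α + β' + 1 by ring] using this
      have h2 : (⇑D)^[α + β] (b * D a) = 0 := by
        rcases Nat.eq_zero_or_pos α with hα | hα
        · subst hα
          rw [Function.iterate_one] at ha
          rw [ha, mul_zero, auxIterZero]
        · obtain ⟨α', rfl⟩ : ∃ α', α = α' + 1 := ⟨α - 1, by omega⟩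
          have := ih β α' b (D a) (by omega) hb
            (by rw [← Function.iterate_succ_apply]; exact ha)
          have h' : β + α' + 1 = α' + 1 + β := by ring
          rwa [h'] at this
      rw [hstep, h1, h2, add_zero]

/-- the top iterate of a product -/
lemma auxMulTop : ∀ (N α β : ℕ) (a b : B), α + β ≤ N →
    (⇑D)^[α + 1] a = 0 → (⇑D)^[β + 1] b = 0 →
    (⇑D)^[α + β] (a * b) = (α + β).choose α • ((⇑D)^[α] a * (⇑D)^[β] b) := by
  intro N
  induction N with
  | zero =>
      intro α β a b hN ha hb
      obtain ⟨rfl, rfl⟩ : α = 0 ∧ β = 0 := by omega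
      simp
  | succ N ih =>
      intro α β a b hN ha hb
      rcases Nat.eq_zero_or_pos (α + β) with hz | hz
      · obtain ⟨rfl, rfl⟩ : α = 0 ∧ β = 0 := by omega
        simp
      obtain ⟨M, hM⟩ : ∃ M, α + β = M + 1 := ⟨α + β - 1, by omega⟩
      have hstep : (⇑D)^[α + β] (a * b)
          = (⇑D)^[M] (a * D b) + (⇑D)^[M] (b * D a) := by
        rw [hM, Function.iterate_succ_apply, D.leibniz, smul_eq_mul, smul_eq_mul, auxIterAdd]
      have h1 : (⇑D)^[M] (a * D b)
          = M.choose α • ((⇑D)^[α] a * (⇑D)^[β] b) := by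
        rcases Nat.eq_zero_or_pos β with hβ | hβ
        · subst hβ
          rw [Function.iterate_one] at hb
          rw [hb, mul_zero, auxIterZero]
          have : M.choose α = 0 := Nat.choose_eq_zero_of_lt (by omega)
          rw [this, zero_smul]
        · obtain ⟨β', rfl⟩ : ∃ β', β = β' + 1 := ⟨β - 1, by omega⟩
          have hMeq : M = α + β' := by omega
          have := ih α β' a (D b) (by omega) ha
            (by rw [← Function.iterate_succ_apply]; exact hb)
          rw [hMeq, this, ← Function.iterate_succ_apply]
      have h2 : (⇑D)^[M] (b * D a)
          = (if α = 0 then 0 else M.choose (α - 1)) • ((⇑D)^[α] a * (⇑D)^[β] b) := by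
        rcases Nat.eq_zero_or_pos α with hα | hα
        · subst hα
          rw [Function.iterate_one] at ha
          rw [ha, mul_zero, auxIterZero, if_pos rfl, zero_smul]
        · obtain ⟨α', rfl⟩ : ∃ α', α = α' + 1 := ⟨α - 1, by omega⟩
          have hMeq : M = β + α' := by omega
          have := ih β α' b (D a) (by omega) hb
            (by rw [← Function.iterate_succ_apply]; exact ha)
          rw [hMeq, this, ← Function.iterate_succ_apply]
          rw [if_neg (by omega)]
          have hs : (β + α').choose β = (β + α').choose (α' + 1 - 1) := by
            have h2 := Nat.choose_symm (show α' ≤ β + α' by omega)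
            have h3 : β + α' - α' = β := by omega
            rw [h3] at h2
            rw [h2]
            norm_num
          rw [hs, mul_comm]
      rw [hstep, h1, h2, ← add_smul]
      congr 1
      rcases Nat.eq_zero_or_pos α with hα | hα
      · subst hα
        simp
      · obtain ⟨α', rfl⟩ : ∃ α', α = α' + 1 := ⟨α - 1, by omega⟩
        rw [if_neg (by omega)]
        have : α' + 1 - 1 = α' := by omega
        rw [this, hM]
        have hM' := Nat.choose_succ_succ' M α'
        omega

end GeneralDer

section MvAux

variable {k : Type*} [CommRing k]

lemma auxJac (P g : MvPolynomial (Fin 3) k) :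
    jac (X 0) P g = pderiv 1 P * pderiv 2 g - pderiv 2 P * pderiv 1 g := by
  unfold jac
  rw [Matrix.det_fin_three]
  simp only [Matrix.of_apply, Matrix.cons_val', Matrix.cons_val_zero, Matrix.cons_val_one,
    Matrix.head_cons, Matrix.empty_val', Matrix.cons_val_fin_one, Matrix.head_fin_const,
    Matrix.cons_val_two, Matrix.tail_cons]
  rw [pderiv_X_self, pderiv_X_of_ne (by decide : (0:Fin 3) ≠ 1),
    pderiv_X_of_ne (by decide : (0:Fin 3) ≠ 2)]
  ring

lemma auxPd2Aeval (φ : MvPolynomial (Fin 2) k) :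
    pderiv 2 (aeval ![X 0, X 1] φ : MvPolynomial (Fin 3) k) = 0 := by
  induction φ using MvPolynomial.induction_on with
  | C a => simp
  | add f g hf hg => simp only [map_add, hf, hg, add_zero]
  | mul_X f i hf =>
      rw [map_mul, pderiv_mul, hf, aeval_X]
      fin_cases i <;> simp

lemma auxAevalExpand (φ : MvPolynomial (Fin 2) k) :
    (aeval ![X 0, X 1] φ : MvPolynomial (Fin 3) k)
      = ∑ u ∈ φ.support, C (coeff u φ) * X 0 ^ (u 0) * X 1 ^ (u 1) := by
  conv_lhs => rw [φ.as_sum]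
  rw [map_sum]
  refine Finset.sum_congr rfl fun u _ => ?_
  rw [aeval_monomial, Finsupp.prod_fintype _ _ (fun i => pow_zero _), Fin.prod_univ_two]
  simp only [Matrix.cons_val_zero, Matrix.cons_val_one, Matrix.head_cons, algebraMap_eq]
  ring

lemma auxMonomial3 (u : Fin 3 →₀ ℕ) (a : k) :
    (monomial u a : MvPolynomial (Fin 3) k)
      = C a * X 0 ^ (u 0) * X 1 ^ (u 1) * X 2 ^ (u 2) := by
  rw [monomial_eq, Finsupp.prod_fintype _ _ (fun i => pow_zero _), Fin.prod_univ_three]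
  ring

end MvAux

section GoodAux

variable {k : Type*} [Field k] [CharZero k]
variable (D : Derivation k (MvPolynomial (Fin 3) k) (MvPolynomial (Fin 3) k))

/-- `b` has `D`-degree `d` with top iterate a nonzero constant times `X0^e`. -/
def auxGood (b : MvPolynomial (Fin 3) k) (d e : ℕ) : Prop :=
  ∃ cc : k, cc ≠ 0 ∧ (⇑D)^[d] b = C cc * X 0 ^ e ∧ (⇑D)^[d + 1] b = 0

lemma auxGood_mul {a b : MvPolynomial (Fin 3) k} {d₁ e₁ d₂ e₂ : ℕ}
    (ha : auxGood D a d₁ e₁) (hb : auxGood D b d₂ e₂) :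
    auxGood D (a * b) (d₁ + d₂) (e₁ + e₂) := by
  obtain ⟨c₁, hc₁, ht₁, hz₁⟩ := ha
  obtain ⟨c₂, hc₂, ht₂, hz₂⟩ := hb
  refine ⟨((d₁ + d₂).choose d₁ : k) * (c₁ * c₂), ?_, ?_, ?_⟩
  · exact mul_ne_zero (Nat.cast_ne_zero.mpr (Nat.choose_pos (Nat.le_add_right _ _)).ne')
      (mul_ne_zero hc₁ hc₂)
  · rw [auxMulTop D (d₁ + d₂) d₁ d₂ a b le_rfl hz₁ hz₂, ht₁, ht₂, nsmul_eq_mul,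
      ← map_natCast (C : k →+* MvPolynomial (Fin 3) k) ((d₁ + d₂).choose d₁),
      map_mul, map_mul, pow_add]
    ring
  · exact auxMulZero D (d₁ + d₂) d₁ d₂ a b le_rfl hz₁ hz₂

lemma auxGood_one : auxGood D 1 0 0 := by
  refine ⟨1, one_ne_zero, by simp, ?_⟩
  rw [Function.iterate_one]
  exact D.map_one_eq_zero

lemma auxGood_pow {b : MvPolynomial (Fin 3) k} {d e : ℕ} (hb : auxGood D b d e) (m : ℕ) :
    auxGood D (b ^ m) (m * d) (m * e) := by
  induction m with
  | zero => simpa using auxGood_one D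
  | succ m ih =>
      have := auxGood_mul D ih hb
      rw [← pow_succ] at this
      have h1 : m * d + d = (m + 1) * d := by ring
      have h2 : m * e + e = (m + 1) * e := by ring
      rwa [h1, h2] at this

lemma auxGood_ndeg {b : MvPolynomial (Fin 3) k} {d e m : ℕ} (hb : auxGood D b d e)
    (hm : (⇑D)^[m] b ≠ 0 ∧ (⇑D)^[m + 1] b = 0) : m = d := by
  obtain ⟨cc, hcc, ht, hz⟩ := hb
  rcases lt_trichotomy m d with h | h | h
  · exfalso
    have : (⇑D)^[d] b = 0 := auxIterPast D hm.2 (by omega)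
    rw [ht] at this
    exact (mul_ne_zero (fun hC => hcc (by simpa using hC))
      (pow_ne_zero _ (X_ne_zero _))) this
  · exact h
  · exact absurd (auxIterPast D hz (by omega)) hm.1

end GoodAux

set_option maxHeartbeats 2000000 in
set_option synthInstance.maxHeartbeats 400000 in
/-- For the non-triangularizable normal form `D = γ Δ_{(X,P)}` of degree `pq-2`
(`p, q` prime, `k` algebraically closed), `B = k[X,Y,Z]` is a free module over
`A = ker D = k[X,P]` with `D`-basis `{Y^i T^j Z^l : 0 ≤ i ≤ q-1, 0 ≤ j ≤ p-1, l ≥ 0}`,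
and for every `n`, writing `n = tpq + sp + r` with `0 ≤ r ≤ p-1`, `0 ≤ s ≤ q-1`,
the `n`-th image ideal `I_n = D^n(B) ∩ A` is generated by `X^{n(pq-2)+qr+s+t}`. -/
theorem free_basis_and_image_ideals_non_triangularizable {k : Type*} [Field k]
    [CharZero k] [IsAlgClosed k]
    (p q : ℕ) (hp : p.Prime) (hq : q.Prime)
    (γ : k) (hγ : γ ≠ 0)
    (h₀ : MvPolynomial (Fin 2) k) (hh : h₀.IsHomogeneous q)
    (hmonic : MvPolynomial.coeff (Finsupp.single (1 : Fin 2) q) h₀ = 1)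
    (c : ℕ → k) (hcp : c p ≠ 0)
    (T P : MvPolynomial (Fin 3) k)
    (hT : T = aeval ![X 0, X 1] h₀ + (X 0) ^ (q - 1) * X 2)
    (hP : P = T ^ p
      + (∑ i ∈ Finset.Icc 1 (p - 1), C (c i) * (X 0) ^ (i * q) * T ^ (p - i))
      + C (c p) * (X 0) ^ (p * q - 1) * X 1)
    (D : Derivation k (MvPolynomial (Fin 3) k) (MvPolynomial (Fin 3) k))
    (hDdef : ∀ g, D g = C γ * jac (X 0) P g)
    (hlnd : IsLND D) (hirr : IsIrred D) (hrank : HasRank2 D)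
    (hhom : IsHomogDer D (p * q - 2)) (hntri : ¬ IsTriangularizable D)
    (hker : {b | D b = 0}
      = ↑(Algebra.adjoin k ({X 0, P} : Set (MvPolynomial (Fin 3) k)))) :
    (∀ g : MvPolynomial (Fin 3) k,
      ∃ (s : Finset (ℕ × ℕ × ℕ)) (a : ℕ × ℕ × ℕ → MvPolynomial (Fin 3) k),
        (∀ v ∈ s, D (a v) = 0 ∧ v.1 ≤ q - 1 ∧ v.2.1 ≤ p - 1) ∧
        g = ∑ v ∈ s, a v * (X 1) ^ v.1 * T ^ v.2.1 * (X 2) ^ v.2.2) ∧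
    (∀ (s : Finset (ℕ × ℕ × ℕ)) (a : ℕ × ℕ × ℕ → MvPolynomial (Fin 3) k),
      (∀ v ∈ s, v.1 ≤ q - 1 ∧ v.2.1 ≤ p - 1) → (∀ v ∈ s, D (a v) = 0) →
      ∑ v ∈ s, a v * (X 1) ^ v.1 * T ^ v.2.1 * (X 2) ^ v.2.2 = 0 →
      ∀ v ∈ s, a v = 0) ∧
    (∀ v v' : ℕ × ℕ × ℕ, v.1 ≤ q - 1 → v.2.1 ≤ p - 1 →
      v'.1 ≤ q - 1 → v'.2.1 ≤ p - 1 → v ≠ v' →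
      ∀ mdeg : ℕ, ndeg D ((X 1) ^ v.1 * T ^ v.2.1 * (X 2) ^ v.2.2) mdeg →
        ¬ ndeg D ((X 1) ^ v'.1 * T ^ v'.2.1 * (X 2) ^ v'.2.2) mdeg) ∧
    (∀ n : ℕ,
      {x | (∃ b, (⇑D)^[n] b = x) ∧ D x = 0}
        = {x | ∃ a, D a = 0 ∧
            x = (X 0) ^ (n * (p * q - 2) + q * (n % p) + ((n / p) % q) + ((n / p) / q))
              * a}) := by
  classical
  have hp2 := hp.two_le
  have hq2 := hq.two_le
  have hpq2 : 2 ≤ p * q := le_trans hp2 (Nat.le_mul_of_pos_right p hq.pos)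
  have hD' : ∀ g, D g = C γ * (pderiv 1 P * pderiv 2 g - pderiv 2 P * pderiv 1 g) :=
    fun g => by rw [hDdef, auxJac]
  have hDX0 : D (X 0) = 0 := by
    rw [hD', pderiv_X_of_ne (by decide : (0:Fin 3) ≠ 1),
      pderiv_X_of_ne (by decide : (0:Fin 3) ≠ 2)]
    ring
  have hDC : ∀ a : k, D (C a) = 0 := fun a => by
    rw [← MvPolynomial.algebraMap_eq]
    exact D.map_algebraMap a
  have hDkermul : ∀ u v : MvPolynomial (Fin 3) k, D u = 0 → D v = 0 → D (u * v) = 0 :=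
    fun u v hu hv => by rw [D.leibniz, hu, hv, smul_zero, smul_zero, add_zero]
  have hDpow : ∀ (u : MvPolynomial (Fin 3) k) (m : ℕ), D u = 0 → D (u ^ m) = 0 :=
    fun u m hu => by rw [D.leibniz_pow, hu, smul_zero, smul_zero]
  have hDCX : ∀ (a : k) (m : ℕ), D (C a * X 0 ^ m) = 0 :=
    fun a m => hDkermul _ _ (hDC a) (hDpow _ m hDX0)
  have hpdT2 : pderiv 2 T = X 0 ^ (q - 1) := by
    rw [hT, map_add, auxPd2Aeval, pderiv_mul, pderiv_pow,
      pderiv_X_of_ne (by decide : (0:Fin 3) ≠ 2), pderiv_X_self]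
    ring
  set F := p * q + q - 2 with hF
  set WT := (p : MvPolynomial (Fin 3) k) * T ^ (p - 1)
    + ∑ i ∈ Finset.Icc 1 (p - 1),
        C (c i) * X 0 ^ (i * q) * (((p - i : ℕ) : MvPolynomial (Fin 3) k) * T ^ (p - i - 1))
    with hWT
  have hpdP : ∀ j : Fin 3, pderiv j (X 0 : MvPolynomial (Fin 3) k) = 0 →
      pderiv j P = WT * pderiv j T
        + C (c p) * X 0 ^ (p * q - 1) * pderiv j (X 1 : MvPolynomial (Fin 3) k) := by
    intro j hj
    rw [hP, map_add, map_add, map_sum]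
    have h1 : pderiv j (T ^ p)
        = ((p : MvPolynomial (Fin 3) k) * T ^ (p - 1)) * pderiv j T := by
      rw [pderiv_pow]
    have h2 : ∀ i ∈ Finset.Icc 1 (p - 1),
        pderiv j (C (c i) * X 0 ^ (i * q) * T ^ (p - i))
          = (C (c i) * X 0 ^ (i * q)
              * (((p - i : ℕ) : MvPolynomial (Fin 3) k) * T ^ (p - i - 1))) * pderiv j T := by
      intro i hi
      rw [pderiv_mul, pderiv_mul, pderiv_pow, pderiv_pow, hj, pderiv_C]
      ring
    have h3 : pderiv j (C (c p) * X 0 ^ (p * q - 1) * X 1)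
        = C (c p) * X 0 ^ (p * q - 1) * pderiv j (X 1) := by
      rw [pderiv_mul, pderiv_mul, pderiv_pow, hj, pderiv_C]
      ring
    rw [h1, Finset.sum_congr rfl h2, h3, ← Finset.sum_mul, hWT]
    ring
  have hDT : D T = C (γ * c p) * X 0 ^ F := by
    rw [hD', hpdP 1 (pderiv_X_of_ne (by decide : (0:Fin 3) ≠ 1)),
      hpdP 2 (pderiv_X_of_ne (by decide : (0:Fin 3) ≠ 2)), hpdT2,
      pderiv_X_self, pderiv_X_of_ne (by decide : (1:Fin 3) ≠ 2)]
    rw [map_mul, hF, show p * q + q - 2 = (p * q - 1) + (q - 1) by omega, pow_add]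
    ring
  have hDP : D P = 0 := by rw [hD']; ring

  -- the T atom
  have hDT2 : (⇑D)^[1 + 1] T = 0 := by
    rw [Function.iterate_succ_apply', Function.iterate_one, hDT]
    exact hDCX _ _
  have hGT : auxGood D T 1 F :=
    ⟨γ * c p, mul_ne_zero hγ hcp, by rw [Function.iterate_one]; exact hDT, hDT2⟩
  -- decomposition of h₀
  set ρ : MvPolynomial (Fin 2) k := h₀ - monomial (Finsupp.single 1 q) 1 with hρdef
  have hu1 : ∀ u ∈ ρ.support, u 1 ≤ q - 1 := by
    intro u hu
    rw [MvPolynomial.mem_support_iff] at hu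
    by_cases hueq : u = Finsupp.single 1 q
    · exfalso
      apply hu
      rw [hρdef, coeff_sub, hueq, hmonic, coeff_monomial, if_pos rfl, sub_self]
    · by_contra hgt
      push_neg at hgt
      have hco : coeff u h₀ ≠ 0 := by
        intro h0'
        apply hu
        rw [hρdef, coeff_sub, h0', coeff_monomial, if_neg (fun h => hueq h.symm), sub_self]
      have hw := hh hco
      have hsum : u 0 + u 1 = q := by
        have hweq : (Finsupp.weight 1) u = u 0 + u 1 := by
          rw [Finsupp.weight_apply, Finsupp.sum_fintype _ _ (fun i => by simp),
            Fin.sum_univ_two]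
          simp
        rw [hweq] at hw
        exact hw
      have hu1' : u 1 = q := by omega
      have hu0' : u 0 = 0 := by omega
      apply hueq
      ext i
      fin_cases i
      · simp [hu0']
      · simp [hu1']
  have hh1 : (aeval ![X 0, X 1] h₀ : MvPolynomial (Fin 3) k)
      = X 1 ^ q + aeval ![X 0, X 1] ρ := by
    have hsplit : h₀ = monomial (Finsupp.single 1 q) 1 + ρ := by rw [hρdef]; ring
    conv_lhs => rw [hsplit]
    rw [map_add, aeval_monomial, map_one, one_mul]
    simp [Finsupp.prod_single_index]
  -- the X 1 atom
  have hple : p * q - 1 ≤ p * F ∧ p * q ≤ p * F := by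
    have h1 : q ≤ F := by omega
    have h2 : p * q ≤ p * F := Nat.mul_le_mul_left p h1
    omega
  set eY := p * F - (p * q - 1) with heY
  have hGTp : auxGood D (T ^ p) p (p * F) := by
    have := auxGood_pow D hGT p
    rwa [mul_one] at this
  obtain ⟨cT, hcT, hTtop, hTzero⟩ := hGTp
  have hfacY : (C (c p) * X 0 ^ (p * q - 1) : MvPolynomial (Fin 3) k) ≠ 0 :=
    mul_ne_zero (fun h => hcp (by simpa using h)) (pow_ne_zero _ (X_ne_zero _))
  have hYtop : (⇑D)^[p] (X 1 : MvPolynomial (Fin 3) k) = C (-cT / c p) * X 0 ^ eY := by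
    have hidY : C (c p) * X 0 ^ (p * q - 1) * X 1
        = P - T ^ p - ∑ i ∈ Finset.Icc 1 (p - 1), C (c i) * X 0 ^ (i * q) * T ^ (p - i) := by
      rw [hP]; ring
    have hDpS : (⇑D)^[p]
        (∑ i ∈ Finset.Icc 1 (p - 1), C (c i) * X 0 ^ (i * q) * T ^ (p - i)) = 0 := by
      rw [auxIterSum]
      refine Finset.sum_eq_zero fun i hi => ?_
      rw [Finset.mem_Icc] at hi
      rw [auxIterKerMul D (hDCX (c i) (i * q)) p]
      obtain ⟨cc2, _, _, hz2⟩ := auxGood_pow D hGT (p - i)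
      rw [mul_one] at hz2
      rw [auxIterPast D hz2 (by omega), mul_zero]
    have happ := congrArg ((⇑D)^[p]) hidY
    rw [auxIterKerMul D (hDCX (c p) (p * q - 1)) p, auxIterSub, auxIterSub, hDpS,
      auxIterKer D hDP (by omega : 1 ≤ p), hTtop] at happ
    apply mul_left_cancel₀ hfacY
    rw [happ]
    have hcc : c p * (-cT / c p) = -cT := by field_simp
    rw [mul_mul_mul_comm, ← map_mul, hcc, ← pow_add,
      show p * q - 1 + eY = p * F by omega, map_neg]
    ring
  have hYzero : (⇑D)^[p + 1] (X 1 : MvPolynomial (Fin 3) k) = 0 := by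
    rw [Function.iterate_succ_apply', hYtop]
    exact hDCX _ _
  have hGY : auxGood D (X 1) p eY :=
    ⟨-cT / c p, div_ne_zero (neg_ne_zero.mpr hcT) hcp, hYtop, hYzero⟩
  -- the X 2 atom
  have heY1 : 1 ≤ eY ∧ q - 1 ≤ q * eY := by
    have h2 : q * 1 ≤ q * eY := Nat.mul_le_mul_left q (by omega)
    omega
  set eZ := q * eY - (q - 1) with heZ
  obtain ⟨cY, hcY, hYqtop, hYqzero⟩ := auxGood_pow D hGY q
  rw [Nat.mul_comm q p] at hYqtop hYqzero
  have hHrest : ∀ m, p * q ≤ m →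
      (⇑D)^[m] (aeval ![X 0, X 1] ρ : MvPolynomial (Fin 3) k) = 0 := by
    intro m hm
    rw [auxAevalExpand, auxIterSum]
    refine Finset.sum_eq_zero fun u hu => ?_
    rw [auxIterKerMul D (hDCX _ _) m]
    obtain ⟨cc, _, _, hz⟩ := auxGood_pow D hGY (u 1)
    have hle : u 1 * p + 1 ≤ m := by
      have h3 : u 1 * p ≤ (q - 1) * p := Nat.mul_le_mul_right _ (hu1 u hu)
      have h4 : (q - 1) * p + p = q * p := by
        have h5 : (q - 1) + 1 = q := by omega
        calc (q - 1) * p + p = ((q - 1) + 1) * p := by ring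
          _ = q * p := by rw [h5]
      have h5 : q * p = p * q := Nat.mul_comm q p
      omega
    rw [auxIterPast D hz hle, mul_zero]
  have hHtop : (⇑D)^[p * q] (aeval ![X 0, X 1] h₀ : MvPolynomial (Fin 3) k)
      = C cY * X 0 ^ (q * eY) := by
    rw [hh1, auxIterAdd, hYqtop, hHrest (p * q) le_rfl, add_zero]
  have hHzero : (⇑D)^[p * q + 1] (aeval ![X 0, X 1] h₀ : MvPolynomial (Fin 3) k) = 0 := by
    rw [hh1, auxIterAdd, hYqzero, hHrest (p * q + 1) (by omega), add_zero]
  have hZtop : (⇑D)^[p * q] (X 2 : MvPolynomial (Fin 3) k) = C (-cY) * X 0 ^ eZ := by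
    have hidZ : (X 0 ^ (q - 1) * X 2 : MvPolynomial (Fin 3) k)
        = T - aeval ![X 0, X 1] h₀ := by rw [hT]; ring
    have happ := congrArg ((⇑D)^[p * q]) hidZ
    rw [auxIterKerMul D (hDpow _ _ hDX0) _, auxIterSub, hHtop,
      auxIterPast D hDT2 (by omega : 1 + 1 ≤ p * q)] at happ
    apply mul_left_cancel₀ (pow_ne_zero (q - 1) (X_ne_zero (0 : Fin 3)))
    rw [happ]
    rw [mul_left_comm, ← pow_add, show q - 1 + eZ = q * eY by omega, map_neg]
    ring
  have hZzero : (⇑D)^[p * q + 1] (X 2 : MvPolynomial (Fin 3) k) = 0 := by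
    rw [Function.iterate_succ_apply', hZtop]
    exact hDCX _ _
  have hGZ : auxGood D (X 2) (p * q) eZ := ⟨-cY, neg_ne_zero.mpr hcY, hZtop, hZzero⟩

  -- Good for basis elements
  have hGb : ∀ v : ℕ × ℕ × ℕ, auxGood D (X 1 ^ v.1 * T ^ v.2.1 * X 2 ^ v.2.2)
      (v.1 * p + v.2.1 + v.2.2 * (p * q)) (v.1 * eY + v.2.1 * F + v.2.2 * eZ) := by
    intro v
    have h1 := auxGood_pow D hGY v.1
    have h2 := auxGood_pow D hGT v.2.1
    have h3 := auxGood_pow D hGZ v.2.2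
    rw [mul_one] at h2
    exact auxGood_mul D (auxGood_mul D h1 h2) h3
  -- digit injectivity
  have hdig : ∀ v w : ℕ × ℕ × ℕ, v.1 ≤ q - 1 → v.2.1 ≤ p - 1 → w.1 ≤ q - 1 → w.2.1 ≤ p - 1 →
      v.1 * p + v.2.1 + v.2.2 * (p * q) = w.1 * p + w.2.1 + w.2.2 * (p * q) → v = w := by
    have key : ∀ v : ℕ × ℕ × ℕ, v.1 ≤ q - 1 → v.2.1 ≤ p - 1 →
        (v.1 * p + v.2.1 + v.2.2 * (p * q)) % p = v.2.1
        ∧ ((v.1 * p + v.2.1 + v.2.2 * (p * q)) / p) % q = v.1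
        ∧ (v.1 * p + v.2.1 + v.2.2 * (p * q)) / p / q = v.2.2 := by
      intro v h1 h2
      have hrw : v.1 * p + v.2.1 + v.2.2 * (p * q) = v.2.1 + p * (v.1 + q * v.2.2) := by ring
      rw [hrw, Nat.add_mul_mod_self_left, Nat.add_mul_div_left _ _ (by omega : 0 < p),
        Nat.mod_eq_of_lt (by omega : v.2.1 < p), Nat.div_eq_of_lt (by omega : v.2.1 < p),
        zero_add, Nat.add_mul_mod_self_left, Nat.add_mul_div_left _ _ (by omega : 0 < q),
        Nat.mod_eq_of_lt (by omega : v.1 < q), Nat.div_eq_of_lt (by omega : v.1 < q), zero_add]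
      exact ⟨rfl, rfl, rfl⟩
    intro v w hv1 hv2 hw1 hw2 heq
    obtain ⟨a1, a2, a3⟩ := key v hv1 hv2
    obtain ⟨b1, b2, b3⟩ := key w hw1 hw2
    rw [heq] at a1 a2 a3
    exact Prod.ext (a2.symm.trans b2) (Prod.ext (a1.symm.trans b1) (a3.symm.trans b3))
  -- part 3
  have part3 : ∀ v v' : ℕ × ℕ × ℕ, v.1 ≤ q - 1 → v.2.1 ≤ p - 1 →
      v'.1 ≤ q - 1 → v'.2.1 ≤ p - 1 → v ≠ v' →
      ∀ mdeg : ℕ, ndeg D ((X 1) ^ v.1 * T ^ v.2.1 * (X 2) ^ v.2.2) mdeg →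
        ¬ ndeg D ((X 1) ^ v'.1 * T ^ v'.2.1 * (X 2) ^ v'.2.2) mdeg := by
    intro v v' hv1 hv2 hv1' hv2' hne mdeg hm hm'
    have e1 := auxGood_ndeg D (hGb v) hm
    have e2 := auxGood_ndeg D (hGb v') hm'
    exact hne (hdig v v' hv1 hv2 hv1' hv2' (by omega))
  -- expanding iterates of combinations
  have hIterExpand : ∀ (s : Finset (ℕ × ℕ × ℕ)) (a : ℕ × ℕ × ℕ → MvPolynomial (Fin 3) k)
      (N : ℕ), (∀ v ∈ s, D (a v) = 0) →
      (⇑D)^[N] (∑ v ∈ s, a v * X 1 ^ v.1 * T ^ v.2.1 * X 2 ^ v.2.2)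
        = ∑ v ∈ s, a v * (⇑D)^[N] (X 1 ^ v.1 * T ^ v.2.1 * X 2 ^ v.2.2) := by
    intro s a N hk
    rw [auxIterSum]
    refine Finset.sum_congr rfl fun v hv => ?_
    rw [show a v * X 1 ^ v.1 * T ^ v.2.1 * X 2 ^ v.2.2
        = a v * (X 1 ^ v.1 * T ^ v.2.1 * X 2 ^ v.2.2) by ring,
      auxIterKerMul D (hk v hv) N]
  -- maximal degree argument
  have hmaxl : ∀ (s : Finset (ℕ × ℕ × ℕ)) (a : ℕ × ℕ × ℕ → MvPolynomial (Fin 3) k),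
      (∀ v ∈ s, v.1 ≤ q - 1 ∧ v.2.1 ≤ p - 1) → (∀ v ∈ s, D (a v) = 0) →
      ∀ v₀ ∈ s, a v₀ ≠ 0 → ∃ v₁ ∈ s, a v₁ ≠ 0 ∧
        (v₀.1 * p + v₀.2.1 + v₀.2.2 * (p * q)) ≤ (v₁.1 * p + v₁.2.1 + v₁.2.2 * (p * q)) ∧
        (⇑D)^[v₁.1 * p + v₁.2.1 + v₁.2.2 * (p * q)]
          (∑ v ∈ s, a v * X 1 ^ v.1 * T ^ v.2.1 * X 2 ^ v.2.2) ≠ 0 := by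
    intro s a hbd hk v₀ hv₀ ha₀
    have hne' : (s.filter (fun v => a v ≠ 0)).Nonempty :=
      ⟨v₀, Finset.mem_filter.mpr ⟨hv₀, ha₀⟩⟩
    obtain ⟨v₁, hv₁s', hv₁max⟩ := Finset.exists_max_image _
      (fun v : ℕ × ℕ × ℕ => v.1 * p + v.2.1 + v.2.2 * (p * q)) hne'
    rw [Finset.mem_filter] at hv₁s'
    refine ⟨v₁, hv₁s'.1, hv₁s'.2,
      hv₁max v₀ (Finset.mem_filter.mpr ⟨hv₀, ha₀⟩), ?_⟩
    rw [hIterExpand s a _ hk]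
    have hsum : ∑ v ∈ s, a v * (⇑D)^[v₁.1 * p + v₁.2.1 + v₁.2.2 * (p * q)]
          (X 1 ^ v.1 * T ^ v.2.1 * X 2 ^ v.2.2)
        = a v₁ * (⇑D)^[v₁.1 * p + v₁.2.1 + v₁.2.2 * (p * q)]
          (X 1 ^ v₁.1 * T ^ v₁.2.1 * X 2 ^ v₁.2.2) := by
      refine Finset.sum_eq_single_of_mem v₁ hv₁s'.1 fun v hv hvne => ?_
      by_cases hav : a v = 0
      · rw [hav, zero_mul]
      · have hvs' : v ∈ s.filter (fun v => a v ≠ 0) := Finset.mem_filter.mpr ⟨hv, hav⟩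
        have hlt : v.1 * p + v.2.1 + v.2.2 * (p * q)
            < v₁.1 * p + v₁.2.1 + v₁.2.2 * (p * q) := by
          rcases Nat.lt_or_ge (v.1 * p + v.2.1 + v.2.2 * (p * q))
            (v₁.1 * p + v₁.2.1 + v₁.2.2 * (p * q)) with h | h
          · exact h
          · exfalso
            have heq2 := le_antisymm (hv₁max v hvs') h
            exact hvne (hdig v v₁ (hbd v hv).1 (hbd v hv).2
              (hbd v₁ hv₁s'.1).1 (hbd v₁ hv₁s'.1).2 heq2)
        obtain ⟨cc, hcc, htt, hzz⟩ := hGb v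
        rw [auxIterPast D hzz (by omega), mul_zero]
    rw [hsum]
    obtain ⟨cc, hcc, htt, hzz⟩ := hGb v₁
    rw [htt]
    exact mul_ne_zero hv₁s'.2
      (mul_ne_zero (fun h => hcc (by simpa using h)) (pow_ne_zero _ (X_ne_zero _)))
  -- part 2
  have part2 : ∀ (s : Finset (ℕ × ℕ × ℕ)) (a : ℕ × ℕ × ℕ → MvPolynomial (Fin 3) k),
      (∀ v ∈ s, v.1 ≤ q - 1 ∧ v.2.1 ≤ p - 1) → (∀ v ∈ s, D (a v) = 0) →
      ∑ v ∈ s, a v * (X 1) ^ v.1 * T ^ v.2.1 * (X 2) ^ v.2.2 = 0 →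
      ∀ v ∈ s, a v = 0 := by
    intro s a hbd hk hzero v hv
    by_contra hav
    obtain ⟨v₁, hv₁, hav₁, _, hne0⟩ := hmaxl s a hbd hk v hv hav
    rw [hzero] at hne0
    exact hne0 (auxIterZero D _)

  -- part 1: generation
  have hX0mem : (X 0 : MvPolynomial (Fin 3) k)
      ∈ Algebra.adjoin k ({X 0, P} : Set (MvPolynomial (Fin 3) k)) :=
    Algebra.subset_adjoin (by simp)
  have hPmem : P ∈ Algebra.adjoin k ({X 0, P} : Set (MvPolynomial (Fin 3) k)) :=
    Algebra.subset_adjoin (by simp)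
  have hCmem : ∀ a : k,
      C a ∈ Algebra.adjoin k ({X 0, P} : Set (MvPolynomial (Fin 3) k)) := fun a => by
    rw [← MvPolynomial.algebraMap_eq]
    exact Subalgebra.algebraMap_mem _ a
  set f : ℕ × ℕ × ℕ → MvPolynomial (Fin 3) k :=
    fun v => if v.1 ≤ q - 1 ∧ v.2.1 ≤ p - 1 then X 1 ^ v.1 * T ^ v.2.1 * X 2 ^ v.2.2 else 0
    with hfdef
  set MM := Submodule.span (Algebra.adjoin k ({X 0, P} : Set (MvPolynomial (Fin 3) k)))
    (Set.range f) with hMM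
  have hsmulmem : ∀ z : MvPolynomial (Fin 3) k,
      z ∈ Algebra.adjoin k ({X 0, P} : Set (MvPolynomial (Fin 3) k)) →
      ∀ m ∈ MM, z * m ∈ MM := by
    intro z hz m hm
    have h2 := Submodule.smul_mem MM
      (⟨z, hz⟩ : Algebra.adjoin k ({X 0, P} : Set (MvPolynomial (Fin 3) k))) hm
    have hsm : (⟨z, hz⟩ : Algebra.adjoin k ({X 0, P} : Set (MvPolynomial (Fin 3) k))) • m
        = z * m := by
      rw [Algebra.smul_def]; rfl
    rwa [hsm] at h2
  have hTp' : T ^ p = P - (∑ i ∈ Finset.Icc 1 (p - 1), C (c i) * X 0 ^ (i * q) * T ^ (p - i))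
      - C (c p) * X 0 ^ (p * q - 1) * X 1 := by rw [hP]; ring
  have hYq' : (X 1 : MvPolynomial (Fin 3) k) ^ q
      = T - (∑ u ∈ ρ.support, C (coeff u ρ) * X 0 ^ (u 0) * X 1 ^ (u 1))
      - X 0 ^ (q - 1) * X 2 := by
    rw [hT, hh1, auxAevalExpand]; ring
  have hgen : ∀ (N bb jj : ℕ), bb + q * jj ≤ N → ∀ (aa cc2 : ℕ),
      X 0 ^ aa * X 1 ^ bb * T ^ jj * X 2 ^ cc2 ∈ MM := by
    intro N
    induction N using Nat.strong_induction_on with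
    | _ N ihN =>
    intro bb
    induction bb using Nat.strong_induction_on with
    | _ bb ihb =>
    intro jj hle aa cc2
    by_cases hj : p ≤ jj
    · have hqp4 : 4 ≤ q * p := Nat.mul_le_mul hq2 hp2
      have hq1 : q * jj = q * (jj - p) + q * p := by
        rw [← Nat.mul_add, Nat.sub_add_cancel hj]
      have heq : X 0 ^ aa * X 1 ^ bb * T ^ jj * X 2 ^ cc2
          = P * (X 0 ^ aa * X 1 ^ bb * T ^ (jj - p) * X 2 ^ cc2)
            - (∑ i ∈ Finset.Icc 1 (p - 1),
                C (c i) * (X 0 ^ (aa + i * q) * X 1 ^ bb * T ^ (jj - i) * X 2 ^ cc2))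
            - C (c p) * (X 0 ^ (aa + (p * q - 1)) * X 1 ^ (bb + 1) * T ^ (jj - p) * X 2 ^ cc2) := by
        have hl1 : X 0 ^ aa * X 1 ^ bb * T ^ jj * X 2 ^ cc2
            = (X 0 ^ aa * X 1 ^ bb * T ^ (jj - p) * X 2 ^ cc2) * T ^ p := by
          conv_lhs => rw [show jj = jj - p + p by omega]
          rw [pow_add]; ring
        rw [hl1, hTp', mul_sub, mul_sub, Finset.mul_sum]
        congr 1
        · congr 1
          · ring
          · refine Finset.sum_congr rfl fun i hi => ?_
            rw [Finset.mem_Icc] at hi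
            rw [pow_add, show jj - i = (jj - p) + (p - i) by omega, pow_add]
            ring
        · rw [pow_add, pow_succ]
          ring
      rw [heq]
      refine Submodule.sub_mem _ (Submodule.sub_mem _ ?_ ?_) ?_
      · exact hsmulmem P hPmem _ (ihN (bb + q * (jj - p)) (by omega) bb (jj - p) le_rfl aa cc2)
      · refine Submodule.sum_mem _ fun i hi => ?_
        rw [Finset.mem_Icc] at hi
        have hqi : q * jj = q * (jj - i) + q * i := by
          rw [← Nat.mul_add, Nat.sub_add_cancel (by omega)]
        have hqi1 : 1 ≤ q * i := by
          calc 1 = 1 * 1 := rfl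
            _ ≤ q * i := Nat.mul_le_mul (by omega) (by omega)
        exact hsmulmem _ (hCmem (c i)) _
          (ihN (bb + q * (jj - i)) (by omega) bb (jj - i) le_rfl (aa + i * q) cc2)
      · exact hsmulmem _ (hCmem (c p)) _
          (ihN (bb + 1 + q * (jj - p)) (by omega) (bb + 1) (jj - p) le_rfl (aa + (p * q - 1)) cc2)
    · by_cases hb : q ≤ bb
      · have heq : X 0 ^ aa * X 1 ^ bb * T ^ jj * X 2 ^ cc2
            = (X 0 ^ aa * X 1 ^ (bb - q) * T ^ (jj + 1) * X 2 ^ cc2)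
              - (∑ u ∈ ρ.support, C (coeff u ρ)
                  * (X 0 ^ (aa + u 0) * X 1 ^ (bb - q + u 1) * T ^ jj * X 2 ^ cc2))
              - X 0 ^ (aa + (q - 1)) * X 1 ^ (bb - q) * T ^ jj * X 2 ^ (cc2 + 1) := by
          have hl1 : X 0 ^ aa * X 1 ^ bb * T ^ jj * X 2 ^ cc2
              = (X 0 ^ aa * X 1 ^ (bb - q) * T ^ jj * X 2 ^ cc2) * X 1 ^ q := by
            conv_lhs => rw [show bb = bb - q + q by omega]
            rw [pow_add]; ring
          rw [hl1, hYq', mul_sub, mul_sub, Finset.mul_sum]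
          congr 1
          · congr 1
            · rw [pow_succ]; ring
            · refine Finset.sum_congr rfl fun u hu => ?_
              rw [pow_add, pow_add]
              ring
          · rw [pow_add, pow_succ]
            ring
        rw [heq]
        refine Submodule.sub_mem _ (Submodule.sub_mem _ ?_ ?_) ?_
        · have hq1 : q * (jj + 1) = q * jj + q := by ring
          exact ihb (bb - q) (by omega) (jj + 1) (by omega) aa cc2
        · refine Submodule.sum_mem _ fun u hu => ?_
          have hu1' := hu1 u hu
          exact hsmulmem _ (hCmem (coeff u ρ)) _
            (ihN (bb - q + u 1 + q * jj) (by omega) (bb - q + u 1) jj le_rfl (aa + u 0) cc2)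
        · exact ihN (bb - q + q * jj) (by omega) (bb - q) jj le_rfl (aa + (q - 1)) (cc2 + 1)
      · have hbase : (X 1 ^ bb * T ^ jj * X 2 ^ cc2 : MvPolynomial (Fin 3) k) ∈ MM := by
          apply Submodule.subset_span
          exact ⟨(bb, jj, cc2), by simp only [hfdef]; rw [if_pos ⟨by omega, by omega⟩]⟩
        have hx := hsmulmem (X 0 ^ aa) (pow_mem hX0mem aa) _ hbase
        rwa [show X 0 ^ aa * (X 1 ^ bb * T ^ jj * X 2 ^ cc2)
          = X 0 ^ aa * X 1 ^ bb * T ^ jj * X 2 ^ cc2 by ring] at hx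
  have hall : ∀ g : MvPolynomial (Fin 3) k, g ∈ MM := by
    intro g
    rw [g.as_sum]
    refine Submodule.sum_mem _ fun u hu => ?_
    rw [auxMonomial3]
    have h0 := hgen (u 1) (u 1) 0 (by omega) (u 0) (u 2)
    rw [pow_zero, mul_one] at h0
    have hx := hsmulmem (C (coeff u g)) (hCmem _) _ h0
    have hre : (C (coeff u g) * X 0 ^ u 0 * X 1 ^ u 1 * X 2 ^ u 2 : MvPolynomial (Fin 3) k)
        = C (coeff u g) * (X 0 ^ u 0 * X 1 ^ u 1 * X 2 ^ u 2) := by ring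
    rw [hre]
    exact hx
  have part1 : ∀ g : MvPolynomial (Fin 3) k,
      ∃ (s : Finset (ℕ × ℕ × ℕ)) (a : ℕ × ℕ × ℕ → MvPolynomial (Fin 3) k),
        (∀ v ∈ s, D (a v) = 0 ∧ v.1 ≤ q - 1 ∧ v.2.1 ≤ p - 1) ∧
        g = ∑ v ∈ s, a v * (X 1) ^ v.1 * T ^ v.2.1 * (X 2) ^ v.2.2 := by
    intro g
    obtain ⟨cc, hcc⟩ := Finsupp.mem_span_range_iff_exists_finsupp.mp (hall g)
    refine ⟨cc.support.filter (fun v => v.1 ≤ q - 1 ∧ v.2.1 ≤ p - 1),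
      fun v => (cc v : MvPolynomial (Fin 3) k), fun v hv => ?_, ?_⟩
    · rw [Finset.mem_filter] at hv
      exact ⟨(Set.ext_iff.mp hker _).mpr (cc v).2, hv.2.1, hv.2.2⟩
    · calc g = cc.sum fun i a => a • f i := hcc.symm
        _ = ∑ v ∈ cc.support, (if v.1 ≤ q - 1 ∧ v.2.1 ≤ p - 1 then
              (cc v : MvPolynomial (Fin 3) k) * (X 1 ^ v.1 * T ^ v.2.1 * X 2 ^ v.2.2)
              else 0) := by
            rw [Finsupp.sum]
            refine Finset.sum_congr rfl fun v hv => ?_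
            by_cases hvp : v.1 ≤ q - 1 ∧ v.2.1 ≤ p - 1
            · rw [if_pos hvp]
              simp only [hfdef]
              rw [if_pos hvp, Algebra.smul_def]
              rfl
            · rw [if_neg hvp]
              simp only [hfdef]
              rw [if_neg hvp, smul_zero]
        _ = ∑ v ∈ cc.support.filter (fun v => v.1 ≤ q - 1 ∧ v.2.1 ≤ p - 1),
              (cc v : MvPolynomial (Fin 3) k) * (X 1 ^ v.1 * T ^ v.2.1 * X 2 ^ v.2.2) :=
            (Finset.sum_filter _ _).symm
        _ = ∑ v ∈ cc.support.filter (fun v => v.1 ≤ q - 1 ∧ v.2.1 ≤ p - 1),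
              (cc v : MvPolynomial (Fin 3) k) * (X 1) ^ v.1 * T ^ v.2.1 * (X 2) ^ v.2.2 := by
            refine Finset.sum_congr rfl fun v hv => by ring

  -- part 4
  have part4 : ∀ n : ℕ,
      {x | (∃ b, (⇑D)^[n] b = x) ∧ D x = 0}
        = {x | ∃ a, D a = 0 ∧
            x = (X 0) ^ (n * (p * q - 2) + q * (n % p) + ((n / p) % q) + ((n / p) / q))
              * a} := by
    intro n
    have hvstar : ((n / p) % q) * p + n % p + (n / p / q) * (p * q) = n := by
      have h1 := Nat.div_add_mod n p
      have h2 := Nat.div_add_mod (n / p) q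
      calc ((n / p) % q) * p + n % p + (n / p / q) * (p * q)
          = p * (q * (n / p / q) + (n / p) % q) + n % p := by ring
        _ = p * (n / p) + n % p := by rw [h2]
        _ = n := h1
    have hFz : (F : ℤ) = (p : ℤ) * q + q - 2 := by
      rw [hF, Nat.cast_sub (show 2 ≤ p * q + q by omega)]
      push_cast
      ring
    have heYz : (eY : ℤ) = (p : ℤ) * F - ((p : ℤ) * q - 1) := by
      rw [heY, Nat.cast_sub hple.1, Nat.cast_sub (show 1 ≤ p * q by omega)]
      push_cast
      ring
    have heZz : (eZ : ℤ) = (q : ℤ) * eY - ((q : ℤ) - 1) := by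
      rw [heZ, Nat.cast_sub heY1.2, Nat.cast_sub (show 1 ≤ q by omega)]
      push_cast
      ring
    have hexp_key : ∀ r s t n2 : ℕ, n2 = s * p + r + t * (p * q) →
        s * eY + r * F + t * eZ = n2 * (p * q - 2) + q * r + s + t := by
      intro r s t n2 hn2
      subst hn2
      zify [hpq2]
      rw [heZz, heYz, hFz]
      push_cast
      ring
    have hexp_id : ((n / p) % q) * eY + (n % p) * F + (n / p / q) * eZ
        = n * (p * q - 2) + q * (n % p) + (n / p) % q + (n / p) / q := by
      exact hexp_key (n % p) ((n / p) % q) (n / p / q) n hvstar.symm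
    have hGvst : auxGood D
        (X 1 ^ ((n / p) % q) * T ^ (n % p) * X 2 ^ (n / p / q))
        (((n / p) % q) * p + (n % p) + (n / p / q) * (p * q))
        (((n / p) % q) * eY + (n % p) * F + (n / p / q) * eZ) :=
      hGb ((n / p) % q, n % p, n / p / q)
    obtain ⟨c₁, hc₁, ht₁, hz₁⟩ := hGvst
    rw [hvstar] at ht₁
    ext x
    simp only [Set.mem_setOf_eq]
    constructor
    · rintro ⟨⟨b, hb⟩, hx⟩
      obtain ⟨sF, aF, hprop, hgexp⟩ := part1 b
      have hd1 : (⇑D)^[n + 1] b = 0 := by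
        rw [Function.iterate_succ_apply', hb]
        exact hx
      have hboundall : ∀ v ∈ sF, aF v ≠ 0 → v.1 * p + v.2.1 + v.2.2 * (p * q) ≤ n := by
        intro v hv hav
        by_contra hgt
        push_neg at hgt
        obtain ⟨v₁, hv₁, hav₁, hge, hne0⟩ := hmaxl sF aF
          (fun v hv => ⟨(hprop v hv).2.1, (hprop v hv).2.2⟩)
          (fun v hv => (hprop v hv).1) v hv hav
        apply hne0
        rw [← hgexp]
        exact auxIterPast D hd1 (by omega)
      have hxval : x = ∑ v ∈ sF, aF v * (⇑D)^[n] (X 1 ^ v.1 * T ^ v.2.1 * X 2 ^ v.2.2) := by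
        rw [← hb, hgexp, hIterExpand _ _ _ (fun v hv => (hprop v hv).1)]
      have hterm : ∀ v ∈ sF, aF v * (⇑D)^[n] (X 1 ^ v.1 * T ^ v.2.1 * X 2 ^ v.2.2)
          = if v = ((n / p) % q, n % p, n / p / q) then
              aF v * (⇑D)^[n] (X 1 ^ v.1 * T ^ v.2.1 * X 2 ^ v.2.2) else 0 := by
        intro v hv
        by_cases hveq : v = ((n / p) % q, n % p, n / p / q)
        · rw [if_pos hveq]
        · rw [if_neg hveq]
          by_cases hav : aF v = 0
          · rw [hav, zero_mul]
          · have hdvle := hboundall v hv hav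
            have hdvlt : v.1 * p + v.2.1 + v.2.2 * (p * q) < n := by
              rcases Nat.lt_or_ge (v.1 * p + v.2.1 + v.2.2 * (p * q)) n with h | h
              · exact h
              · exfalso
                apply hveq
                refine hdig v ((n / p) % q, n % p, n / p / q)
                  (hprop v hv).2.1 (hprop v hv).2.2 ?_ ?_ ?_
                · show (n / p) % q ≤ q - 1
                  have := Nat.mod_lt (n / p) (show 0 < q by omega)
                  omega
                · show n % p ≤ p - 1
                  have := Nat.mod_lt n (show 0 < p by omega)
                  omega
                · show v.1 * p + v.2.1 + v.2.2 * (p * q)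
                    = ((n / p) % q) * p + (n % p) + (n / p / q) * (p * q)
                  omega
            obtain ⟨cc1, hcc1, htt1, hzz1⟩ := hGb v
            rw [auxIterPast D hzz1 (by omega), mul_zero]
      rw [Finset.sum_congr rfl hterm, Finset.sum_ite_eq' sF _ _] at hxval
      by_cases hmem : ((n / p) % q, n % p, n / p / q) ∈ sF
      · rw [if_pos hmem] at hxval
        refine ⟨C c₁ * aF ((n / p) % q, n % p, n / p / q),
          hDkermul _ _ (hDC c₁) (hprop _ hmem).1, ?_⟩
        rw [hxval]
        have hDn : (⇑D)^[n] (X 1 ^ ((n / p) % q, n % p, n / p / q).1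
            * T ^ ((n / p) % q, n % p, n / p / q).2.1
            * X 2 ^ ((n / p) % q, n % p, n / p / q).2.2)
            = C c₁ * X 0 ^ (((n / p) % q) * eY + (n % p) * F + (n / p / q) * eZ) := ht₁
        rw [hDn, ← hexp_id]
        ring
      · rw [if_neg hmem] at hxval
        exact ⟨0, D.map_zero, by rw [hxval, mul_zero]⟩
    · rintro ⟨a, ha, rfl⟩
      constructor
      · refine ⟨(C c₁⁻¹ * a) * (X 1 ^ ((n / p) % q) * T ^ (n % p) * X 2 ^ (n / p / q)), ?_⟩
        rw [auxIterKerMul D (hDkermul _ _ (hDC _) ha) n, ht₁]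
        have hCinv : (C c₁⁻¹ : MvPolynomial (Fin 3) k) * C c₁ = 1 := by
          rw [← map_mul, inv_mul_cancel₀ hc₁, map_one]
        calc (C c₁⁻¹ * a) * (C c₁
              * X 0 ^ (((n / p) % q) * eY + (n % p) * F + (n / p / q) * eZ))
            = (C c₁⁻¹ * C c₁)
              * (X 0 ^ (((n / p) % q) * eY + (n % p) * F + (n / p / q) * eZ) * a) := by ring
          _ = X 0 ^ (((n / p) % q) * eY + (n % p) * F + (n / p / q) * eZ) * a := by
              rw [hCinv, one_mul]
          _ = X 0 ^ (n * (p * q - 2) + q * (n % p) + (n / p) % q + (n / p) / q) * a := by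
              rw [hexp_id]
      · exact hDkermul _ _ (hDpow _ _ hDX0) ha
  exact ⟨part1, part2, part3, part4⟩
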